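/- Let r ∈ ℕ and let a₁, a₂ be real numbers with 0 < a₂ < a₁. Then the improper integral ∫_0^1 (log u)^r / (a₁ + a₂·u) du converges and equals (−1)^{r+1} · (r!/a₂) · Σ_{n=1}^∞ (−a₂/a₁)^n / n^{r+1}, where log u denotes the real logarithm. -/

import Mathlib

/-!
Substituting `u = exp (-t)` turns `∫₀¹ u ^ n (-log u) ^ r du` into the Gamma integral
`∫₀^∞ t ^ r exp (-(n + 1) t) dt = r! / (n + 1) ^ (r + 1)`. Expanding
`1 / (a₁ + a₂ u) = a₁⁻¹ ∑ (-a₂ u / a₁) ^ n` and integrating term by term (the series of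
integrals of the absolute values is dominated by a geometric series with ratio `a₂ / a₁ < 1`)
gives the polylogarithm series.
-/

open Real MeasureTheory Set
open scoped Nat

lemma image_exp_neg_Ioi_zero : (fun t : ℝ => exp (-t)) '' Ioi 0 = Ioo 0 1 := by
  change (exp ∘ Neg.neg) '' _ = _
  rw [image_comp exp Neg.neg, image_neg_Ioi, neg_zero, image_exp_Iio, exp_zero]

lemma abs_deriv_smul_exp_neg (s a t : ℝ) :
    |exp (-t) * -1| • (exp (-t) ^ s * (-log (exp (-t))) ^ a) =
      t ^ (a + 1 - 1) * exp (-((s + 1) * t)) := by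
  rw [smul_eq_mul, mul_neg_one, abs_neg, abs_of_pos (exp_pos _), log_exp, neg_neg,
    add_sub_cancel_right, ← exp_mul, ← mul_assoc, ← exp_add]
  ring_nf

lemma integrableOn_rpow_mul_neg_log_rpow {s a : ℝ} (hs : -1 < s) (ha : -1 < a) :
    IntegrableOn (fun u : ℝ => u ^ s * (-log u) ^ a) (Ioc 0 1) := by
  rw [integrableOn_Ioc_iff_integrableOn_Ioo, ← image_exp_neg_Ioi_zero,
    integrableOn_image_iff_integrableOn_abs_deriv_smul measurableSet_Ioi
      (fun t _ => (hasDerivAt_neg' t).exp.hasDerivWithinAt)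
      (exp_injective.comp neg_injective).injOn]
  simp only [abs_deriv_smul_exp_neg, add_sub_cancel_right]
  have h := integrableOn_rpow_mul_exp_neg_mul_rpow ha one_pos (by linarith : 0 < s + 1)
  simpa only [rpow_one, neg_mul] using h

lemma integral_rpow_mul_neg_log_rpow {s a : ℝ} (hs : -1 < s) (ha : -1 < a) :
    ∫ u in Ioc 0 1, u ^ s * (-log u) ^ a = Gamma (a + 1) / (s + 1) ^ (a + 1) := by
  rw [integral_Ioc_eq_integral_Ioo, ← image_exp_neg_Ioi_zero,
    integral_image_eq_integral_abs_deriv_smul measurableSet_Ioi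
      (fun t _ => (hasDerivAt_neg' t).exp.hasDerivWithinAt)
      (exp_injective.comp neg_injective).injOn]
  simp only [abs_deriv_smul_exp_neg]
  rw [integral_rpow_mul_exp_neg_mul_Ioi (by linarith) (by linarith), one_div,
    inv_rpow (by linarith), inv_mul_eq_div]

lemma integrableOn_pow_mul_neg_log_pow (n r : ℕ) :
    IntegrableOn (fun u : ℝ => u ^ n * (-log u) ^ r) (Ioc 0 1) := by
  simpa only [rpow_natCast] using
    integrableOn_rpow_mul_neg_log_rpow (s := n) (a := r)
      (neg_one_lt_zero.trans_le n.cast_nonneg) (neg_one_lt_zero.trans_le r.cast_nonneg)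

lemma integral_pow_mul_neg_log_pow (n r : ℕ) :
    ∫ u in Ioc 0 1, u ^ n * (-log u) ^ r = r ! / (n + 1) ^ (r + 1) := by
  have h := integral_rpow_mul_neg_log_rpow (s := n) (a := r)
      (neg_one_lt_zero.trans_le n.cast_nonneg) (neg_one_lt_zero.trans_le r.cast_nonneg)
  rw [Gamma_nat_eq_factorial, ← Nat.cast_succ r, rpow_natCast] at h
  simpa only [rpow_natCast] using h

lemma one_sub_abs_le_abs_one_sub_mul {q u : ℝ} (hu : |u| ≤ 1) : 1 - |q| ≤ |1 - q * u| :=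
  calc 1 - |q| ≤ 1 - |q * u| := by
        rw [abs_mul]; gcongr; exact mul_le_of_le_one_right (abs_nonneg q) hu
    _ ≤ |1 - q * u| := by simpa using abs_sub_abs_le_abs_sub 1 (q * u)

lemma integrableOn_neg_log_pow_div_one_sub_mul {q : ℝ} (hq : |q| < 1) (r : ℕ) :
    IntegrableOn (fun u : ℝ => (-log u) ^ r / (1 - q * u)) (Ioc 0 1) := by
  refine ((integrableOn_pow_mul_neg_log_pow 0 r).const_mul (1 - |q|)⁻¹).mono'
    (by fun_prop : Measurable _).aestronglyMeasurable ?_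
  filter_upwards [ae_restrict_mem measurableSet_Ioc] with u ⟨hu₀, hu₁⟩
  have hlog : 0 ≤ -log u := neg_nonneg.2 (log_nonpos hu₀.le hu₁)
  have hden := one_sub_abs_le_abs_one_sub_mul (q := q) (abs_le.2 ⟨by linarith, hu₁⟩)
  rw [norm_div, norm_pow, norm_of_nonneg hlog, Real.norm_eq_abs, pow_zero, one_mul, div_eq_inv_mul]
  gcongr

theorem hasSum_integral_neg_log_pow_div_one_sub_mul {q : ℝ} (hq : |q| < 1) (r : ℕ) :
    HasSum (fun n : ℕ => q ^ n * (r ! / (n + 1) ^ (r + 1)))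
      (∫ u in Ioc 0 1, (-log u) ^ r / (1 - q * u)) := by
  set F : ℕ → ℝ → ℝ := fun n u => q ^ n * (u ^ n * (-log u) ^ r)
  have hF_int (n : ℕ) : IntegrableOn (F n) (Ioc 0 1) :=
    (integrableOn_pow_mul_neg_log_pow n r).const_mul _
  have hF_norm (n : ℕ) : ∫ u in Ioc 0 1, ‖F n u‖ = |q| ^ n * (r ! / (n + 1) ^ (r + 1)) := by
    rw [← integral_pow_mul_neg_log_pow, ← integral_const_mul]
    refine setIntegral_congr_fun measurableSet_Ioc fun u ⟨hu₀, hu₁⟩ => ?_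
    have hlog : 0 ≤ -log u := neg_nonneg.2 (log_nonpos hu₀.le hu₁)
    simp only [F, norm_mul, norm_pow, norm_of_nonneg hu₀.le, norm_of_nonneg hlog,
      Real.norm_eq_abs]
  have hF_sum : Summable fun n => ∫ u in Ioc 0 1, ‖F n u‖ := by
    refine .of_nonneg_of_le (fun n => integral_nonneg fun u => norm_nonneg _) (fun n => ?_)
      ((summable_geometric_of_lt_one (abs_nonneg q) hq).mul_right (r ! : ℝ))
    rw [hF_norm]
    gcongr
    exact div_le_self (Nat.cast_nonneg _) (one_le_pow₀ (le_add_of_nonneg_left n.cast_nonneg))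
  have hF_tsum : ∀ u ∈ Ioc (0 : ℝ) 1, ∑' n, F n u = (-log u) ^ r / (1 - q * u) := by
    rintro u ⟨hu₀, hu₁⟩
    have hqu : |q * u| < 1 := by
      rw [abs_mul, abs_of_pos hu₀]; nlinarith [abs_nonneg q]
    simp only [F, ← mul_assoc, ← mul_pow, tsum_mul_right, tsum_geometric_of_abs_lt_one hqu]
    ring
  have h := hasSum_integral_of_summable_integral_norm hF_int hF_sum
  rw [setIntegral_congr_fun measurableSet_Ioc hF_tsum] at h
  simpa only [F, integral_const_mul, integral_pow_mul_neg_log_pow] using h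

/-- Appendix Lemma 8.4: `∫_0^1 (log u)^r/(a₁+a₂u) du` converges and equals
`(-1)^{r+1} (r!/a₂) Li_{r+1}(-a₂/a₁)`, the polylogarithm written as the
absolutely convergent series `Σ_{n≥1} (-a₂/a₁)^n/n^{r+1}`. -/
theorem integral_log_pow_div_linear (r : ℕ) (a₁ a₂ : ℝ)
    (ha₂ : 0 < a₂) (ha : a₂ < a₁) :
    IntegrableOn (fun u : ℝ => (Real.log u) ^ r / (a₁ + a₂ * u)) (Set.Ioc (0:ℝ) 1) ∧
      ∫ u in Set.Ioc (0:ℝ) 1, (Real.log u) ^ r / (a₁ + a₂ * u) =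
        (-1) ^ (r + 1) * ((r.factorial : ℝ) / a₂) *
          ∑' n : ℕ, (-a₂ / a₁) ^ (n + 1) / ((n : ℝ) + 1) ^ (r + 1) := by
  have ha₁ : 0 < a₁ := ha₂.trans ha
  set q := -a₂ / a₁ with hq_def
  have hq : |q| < 1 := by
    rwa [abs_div, abs_neg, abs_of_pos ha₂, abs_of_pos ha₁, div_lt_one ha₁]
  have hform : (fun u : ℝ => log u ^ r / (a₁ + a₂ * u)) =
      fun u => (-1) ^ r / a₁ * ((-log u) ^ r / (1 - q * u)) := by
    funext u
    have hden : 1 - q * u = (a₁ + a₂ * u) / a₁ := by rw [hq_def]; field_simp; ring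
    rw [hden, div_div_eq_mul_div, ← neg_neg (log u), neg_pow (-log u), neg_neg]
    field_simp
  rw [hform]
  refine ⟨(integrableOn_neg_log_pow_div_one_sub_mul hq r).const_mul _, ?_⟩
  rw [integral_const_mul, (hasSum_integral_neg_log_pow_div_one_sub_mul hq r).tsum_eq.symm,
    ← tsum_mul_left, ← tsum_mul_left]
  refine tsum_congr fun n => ?_
  have hqa : q * a₁ = -a₂ := by rw [hq_def]; field_simp
  field_simp
  linear_combination (-1) ^ r * q ^ n * hqa
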